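/- arXiv:1703.05794 — 7 statements merged into one kernel-verified Lean document; each statement's English description precedes it below -/
import Mathlib

section
/- Identifiability of the SIFA model under the general conditions (Proposition 2.1, first part): Fix K ≥ 2 and block dimensions p_1,…,p_K. Let θ = ({f_k}_{k=0}^K, V_0, V_1,…,V_K, Σ_0,…,Σ_K, σ_1²,…,σ_K²) with joint rank r_0 and individual ranks r_1,…,r_K, and θ̂ a second parameter set with ranks r̂_0,…,r̂_K, both satisfying the basic conditions, condition A1 and condition A2. If θ and θ̂ are observationally equivalent, i.e. μ⋆(x) = μ̂⋆(x) for every x ∈ ℝ^q and Σ⋆ = Σ̂⋆, then r̂_k = r_k for k = 0,1,…,K, σ̂_k² = σ_k² for k = 1,…,K, Σ̂_k = Σ_k for k = 0,1,…,K, and there exist diagonal matrices S_k whose diagonal entries are ±1 such that V̂_k = V_k S_k and f̂_k(x) = S_k f_k(x) for all x ∈ ℝ^q and all k = 0,1,…,K. -/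
/-!
In block `k`, a vector orthogonal to the `r₀ + rₖ < pₖ` columns of `[V₀ₖ Vₖ]` sees only the
noise in the quadratic form of `Σ⋆`, which pins down `σₖ²`. The off-diagonal block of `Σ⋆`
between block `k` and any other block shows that `V₀ₖ` and `V̂₀ₖ` have the same column space.
Conjugating the diagonal block by the oblique projection onto that space along `Vₖ` bounds each
joint covariance `V₀ₖ Σ₀ V₀ₖᵀ` by the other in the Loewner order, so they agree, and then so do
the individual ones. A spectral decomposition with distinct eigenvalues is unique up to the
signs of the eigenvectors, and full column rank of `[V₀ₖ Vₖ]` transfers this to the mean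
functions.
-/

open Matrix

/-- Block-diagonal matrix with diagonal blocks `V 1, …, V K`, realized on sigma types. -/
def blkdiag {K : ℕ} {p r : Fin K → ℕ}
    (V : (k : Fin K) → Matrix (Fin (p k)) (Fin (r k)) ℝ) :
    Matrix ((k : Fin K) × Fin (p k)) ((k : Fin K) × Fin (r k)) ℝ :=
  Matrix.of fun i j =>
    if h : i.1 = j.1 then V j.1 (cast (congrArg (fun k => Fin (p k)) h) i.2) j.2 else 0

open Function
open scoped MatrixOrder

namespace Matrix

section LeftInverse

variable {R : Type*} [Field R] {ι a b : Type*} [Fintype a] [Fintype b]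

theorem exists_mul_eq_one_of_injective_mulVec [Fintype ι] [DecidableEq ι] [DecidableEq a]
    {W : Matrix ι a R} (h : Injective W.mulVec) : ∃ L : Matrix a ι R, L * W = 1 := by
  obtain ⟨g, hg⟩ := W.mulVecLin.exists_leftInverse_of_injective (LinearMap.ker_eq_bot.mpr h)
  refine ⟨LinearMap.toMatrix' g, ?_⟩
  rw [← LinearMap.toMatrix'_toLin' W, ← LinearMap.toMatrix'_comp, Matrix.toLin'_apply', hg,
    LinearMap.toMatrix'_id]

theorem exists_mul_eq_one_and_mul_eq_zero_of_injective_fromCols [Fintype ι] [DecidableEq ι]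
    [DecidableEq a] [DecidableEq b] {W : Matrix ι a R} {V : Matrix ι b R}
    (h : Injective (fromCols W V).mulVec) : ∃ P : Matrix a ι R, P * W = 1 ∧ P * V = 0 := by
  obtain ⟨L, hL⟩ := exists_mul_eq_one_of_injective_mulVec h
  rw [← fromRows_toRows L, fromRows_mul_fromCols, ← fromBlocks_one, fromBlocks_inj] at hL
  exact ⟨L.toRows₁, hL.1, hL.2.1⟩

theorem exists_ne_zero_vecMul_eq_zero [Fintype ι] {C : Matrix ι a R}
    (h : Fintype.card a < Fintype.card ι) : ∃ v ≠ 0, v ᵥ* C = 0 := by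
  have := LinearMap.ker_ne_bot_of_finrank_lt (f := C.vecMulLinear) (by simpa using h)
  obtain ⟨v, hv, hv0⟩ := Submodule.exists_mem_ne_zero_of_ne_bot this
  exact ⟨v, hv0, hv⟩

theorem exists_eq_mul_of_mul_diagonal_mul_transpose_eq [DecidableEq a] {κ c : Type*}
    [Fintype κ] [Fintype c] [DecidableEq c] {A : Matrix ι a R} {U : Matrix κ a R} {C : Matrix ι c R}
    {U' : Matrix κ c R} {L : Matrix a κ R} {d : a → R} {d' : c → R} (hLU : L * U = 1)
    (hd : ∀ i, d i ≠ 0) (h : A * diagonal d * Uᵀ = C * diagonal d' * U'ᵀ) :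
    ∃ X : Matrix c a R, A = C * X := by
  have hdd : diagonal d * diagonal d⁻¹ = 1 := by
    rw [diagonal_mul_diagonal, ← diagonal_one]
    exact congrArg diagonal (funext fun i => mul_inv_cancel₀ (hd i))
  refine ⟨diagonal d' * U'ᵀ * Lᵀ * diagonal d⁻¹, ?_⟩
  calc A = A * diagonal d * (L * U)ᵀ * diagonal d⁻¹ := by
        rw [hLU, transpose_one, Matrix.mul_one, Matrix.mul_assoc, hdd, Matrix.mul_one]
    _ = C * (diagonal d' * U'ᵀ * Lᵀ * diagonal d⁻¹) := by
        rw [transpose_mul, ← Matrix.mul_assoc, ← Matrix.mul_assoc, h]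
        simp only [Matrix.mul_assoc]

end LeftInverse

section Loewner

variable {ι κ a b a' b' : Type*} [Fintype ι] [Fintype a] [Fintype b] [Fintype a'] [Fintype b']
  [DecidableEq a] [DecidableEq b] [DecidableEq a'] [DecidableEq b']

theorem mul_mul_diagonal_mul_transpose_mul_transpose {R : Type*} [CommSemiring R]
    (X : Matrix κ ι R) (A : Matrix ι a R) (d : a → R) :
    X * (A * diagonal d * Aᵀ) * Xᵀ = (X * A) * diagonal d * (X * A)ᵀ := by
  simp only [transpose_mul, Matrix.mul_assoc]

theorem posSemidef_mul_diagonal_mul_transpose {d : a → ℝ} (hd : 0 ≤ d) (A : Matrix ι a ℝ) :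
    (A * diagonal d * Aᵀ).PosSemidef := by
  simpa using (PosSemidef.diagonal hd).mul_mul_conjTranspose_same A

theorem le_of_add_smul_one_eq [DecidableEq ι] {M M' : Matrix ι ι ℝ} {σ σ' : ℝ}
    (hM' : M'.PosSemidef) {v : ι → ℝ} (hv : v ≠ 0) (hMv : M *ᵥ v = 0)
    (h : M + σ • 1 = M' + σ' • 1) : σ' ≤ σ := by
  have hq := congrArg (fun N => v ⬝ᵥ (N *ᵥ v)) h
  simp only [add_mulVec, dotProduct_add, smul_mulVec, one_mulVec, dotProduct_smul, hMv,
    smul_eq_mul, zero_add] at hq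
  have hM'v : 0 ≤ v ⬝ᵥ (M' *ᵥ v) := by simpa using hM'.dotProduct_mulVec_nonneg v
  have hvv : 0 < v ⬝ᵥ v := by simpa using dotProduct_star_self_pos_iff.mpr hv
  nlinarith

variable {W : Matrix ι a ℝ} {V : Matrix ι b ℝ} {W' : Matrix ι a' ℝ} {V' : Matrix ι b' ℝ}
  {d₀ : a → ℝ} {d : b → ℝ} {e₀ : a' → ℝ} {e : b' → ℝ}

theorem le_of_add_mul_diagonal_mul_transpose_add_smul_one_eq [DecidableEq ι] {σ σ' : ℝ}
    (hcard : Fintype.card a + Fintype.card b < Fintype.card ι) (he₀ : 0 ≤ e₀) (he : 0 ≤ e)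
    (h : W * diagonal d₀ * Wᵀ + V * diagonal d * Vᵀ + σ • 1
      = W' * diagonal e₀ * W'ᵀ + V' * diagonal e * V'ᵀ + σ' • 1) :
    σ' ≤ σ := by
  obtain ⟨v, hv, hvWV⟩ := exists_ne_zero_vecMul_eq_zero (C := fromCols W V) (by simpa using hcard)
  rw [vecMul_fromCols, ← Sum.elim_zero_zero, Sum.elim_eq_iff] at hvWV
  refine le_of_add_smul_one_eq ((posSemidef_mul_diagonal_mul_transpose he₀ W').add
    (posSemidef_mul_diagonal_mul_transpose he V')) hv ?_ h
  rw [add_mulVec, ← mulVec_mulVec, ← mulVec_mulVec, mulVec_transpose, hvWV.1, ← mulVec_mulVec,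
    ← mulVec_mulVec, mulVec_transpose, hvWV.2]
  simp

/-- Conjugate `h` by `W * P`, the projection onto the column space of `W` along that of `V`. -/
theorem mul_diagonal_mul_transpose_le_of_add_eq {P : Matrix a ι ℝ} (hPW : P * W = 1)
    (hPV : P * V = 0) (hW' : ∃ A : Matrix a a' ℝ, W' = W * A) (he : 0 ≤ e)
    (h : W * diagonal d₀ * Wᵀ + V * diagonal d * Vᵀ
      = W' * diagonal e₀ * W'ᵀ + V' * diagonal e * V'ᵀ) :
    W' * diagonal e₀ * W'ᵀ ≤ W * diagonal d₀ * Wᵀ := by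
  obtain ⟨A, rfl⟩ := hW'
  have hQW : (W * P) * W = W := by rw [Matrix.mul_assoc, hPW, Matrix.mul_one]
  have hQV : (W * P) * V = 0 := by rw [Matrix.mul_assoc, hPV, Matrix.mul_zero]
  have hQW' : (W * P) * (W * A) = W * A := by rw [← Matrix.mul_assoc, hQW]
  have hconj := congrArg (fun M => (W * P) * M * (W * P)ᵀ) h
  simp only [Matrix.mul_add, Matrix.add_mul, mul_mul_diagonal_mul_transpose_mul_transpose, hQW,
    hQV, hQW', Matrix.zero_mul, transpose_zero, Matrix.mul_zero, add_zero] at hconj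
  rw [le_iff, hconj, add_sub_cancel_left]
  exact posSemidef_mul_diagonal_mul_transpose he _

theorem mul_diagonal_mul_transpose_eq_of_add_eq [DecidableEq ι]
    (hWV : Injective (fromCols W V).mulVec) (hWV' : Injective (fromCols W' V').mulVec)
    (hW' : ∃ A : Matrix a a' ℝ, W' = W * A) (hW : ∃ A : Matrix a' a ℝ, W = W' * A)
    (hd : 0 ≤ d) (he : 0 ≤ e)
    (h : W * diagonal d₀ * Wᵀ + V * diagonal d * Vᵀ
      = W' * diagonal e₀ * W'ᵀ + V' * diagonal e * V'ᵀ) :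
    W * diagonal d₀ * Wᵀ = W' * diagonal e₀ * W'ᵀ := by
  obtain ⟨P, hPW, hPV⟩ := exists_mul_eq_one_and_mul_eq_zero_of_injective_fromCols hWV
  obtain ⟨P', hPW', hPV'⟩ := exists_mul_eq_one_and_mul_eq_zero_of_injective_fromCols hWV'
  exact le_antisymm (mul_diagonal_mul_transpose_le_of_add_eq hPW' hPV' hW hd h.symm)
    (mul_diagonal_mul_transpose_le_of_add_eq hPW hPV hW' he h)

end Loewner

section Spectral

variable {ι a b : Type*} [Fintype ι] [Fintype a] [Fintype b] [DecidableEq a] [DecidableEq b]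

theorem eq_mul_transpose_mul_of_mul_diagonal_mul_transpose_eq {R : Type*} [Field R]
    {V : Matrix ι a R} {W : Matrix ι b R} {d : a → R} {e : b → R}
    (hV : Vᵀ * V = 1) (hW : Wᵀ * W = 1) (he : ∀ j, e j ≠ 0)
    (h : V * diagonal d * Vᵀ = W * diagonal e * Wᵀ) :
    W = V * (Vᵀ * W) ∧ diagonal d * (Vᵀ * W) = (Vᵀ * W) * diagonal e := by
  have hcomm : diagonal d * (Vᵀ * W) = (Vᵀ * W) * diagonal e :=
    calc diagonal d * (Vᵀ * W) = Vᵀ * (V * diagonal d * Vᵀ) * W := by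
          simp only [← Matrix.mul_assoc, hV, Matrix.one_mul]
      _ = (Vᵀ * W) * diagonal e := by
          simp only [h, Matrix.mul_assoc, hW, Matrix.mul_one]
  refine ⟨?_, hcomm⟩
  have hWe : W * diagonal e = V * (Vᵀ * W) * diagonal e :=
    calc W * diagonal e = W * diagonal e * Wᵀ * W := by
          simp only [Matrix.mul_assoc, hW, Matrix.mul_one]
      _ = V * (Vᵀ * W) * diagonal e := by
          simp only [← h, Matrix.mul_assoc, ← hcomm]
  ext i j
  simpa [mul_diagonal, he j] using congrFun (congrFun hWe i) j

theorem IsDiag.of_diagonal_mul_eq_mul_diagonal {R : Type*} [CommRing R] [NoZeroDivisors R]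
    {B : Matrix a a R} {d : a → R} (hd : Injective d) (h : diagonal d * B = B * diagonal d) :
    B.IsDiag := by
  intro i j hij
  have hij' := congrFun (congrFun h i) j
  rw [diagonal_mul, mul_diagonal, mul_comm] at hij'
  by_contra hB
  exact hij (hd (mul_left_cancel₀ hB hij'))

theorem range_subset_range_of_diagonal_mul_eq_mul_diagonal {R : Type*} [CommRing R]
    [Nontrivial R] [NoZeroDivisors R] {B : Matrix a b R} {d : a → R} {e : b → R}
    (hB : B * Bᵀ = 1) (h : diagonal d * B = B * diagonal e) : Set.range d ⊆ Set.range e := by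
  rintro _ ⟨i, rfl⟩
  obtain ⟨j, hBij⟩ : ∃ j, B i j ≠ 0 := by
    by_contra! hrow
    simpa [mul_apply, hrow] using congrFun (congrFun hB i) i
  have hij := congrFun (congrFun h i) j
  rw [diagonal_mul, mul_diagonal, mul_comm] at hij
  exact ⟨j, (mul_left_cancel₀ hBij hij).symm⟩

theorem exists_signs_of_mul_diagonal_mul_transpose_eq {m n : ℕ} {V : Matrix ι (Fin m) ℝ}
    {W : Matrix ι (Fin n) ℝ} {d : Fin m → ℝ} {e : Fin n → ℝ}
    (hV : Vᵀ * V = 1) (hW : Wᵀ * W = 1) (hd : StrictAnti d) (hd₀ : ∀ i, d i ≠ 0)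
    (he : StrictAnti e) (he₀ : ∀ j, e j ≠ 0) (h : V * diagonal d * Vᵀ = W * diagonal e * Wᵀ) :
    ∃ hnm : n = m, (∀ i, e (Fin.cast hnm.symm i) = d i) ∧
      ∃ s : Fin m → ℝ, (∀ i, s i = 1 ∨ s i = -1) ∧
        W.submatrix id (Fin.cast hnm.symm) = V * diagonal s := by
  obtain ⟨hWVB, hdB⟩ := eq_mul_transpose_mul_of_mul_diagonal_mul_transpose_eq hV hW he₀ h
  obtain ⟨hVWB, heB⟩ := eq_mul_transpose_mul_of_mul_diagonal_mul_transpose_eq hW hV hd₀ h.symm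
  set B := Vᵀ * W
  have hBt : Wᵀ * V = Bᵀ := by rw [transpose_mul, transpose_transpose]
  rw [hBt] at hVWB heB
  have hBtB : Bᵀ * B = 1 := by rw [← hBt, Matrix.mul_assoc, ← hWVB, hW]
  have hBBt : B * Bᵀ = 1 := by rw [Matrix.mul_assoc, ← hVWB, hV]
  obtain rfl : n = m := by simpa using (square_of_invertible B Bᵀ hBBt hBtB).symm
  obtain rfl : d = e := (hd.range_inj he).mp <|
    (range_subset_range_of_diagonal_mul_eq_mul_diagonal hBBt hdB).antisymm
      (range_subset_range_of_diagonal_mul_eq_mul_diagonal hBtB heB)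
  have hBdiag := IsDiag.of_diagonal_mul_eq_mul_diagonal hd.injective hdB
  refine ⟨rfl, fun _ => rfl, B.diag, fun i => ?_, ?_⟩
  · rw [← hBdiag.diagonal_diag, diagonal_transpose, diagonal_mul_diagonal, ← diagonal_one,
      diagonal_eq_diagonal_iff] at hBtB
    exact mul_self_eq_one_iff.mp (hBtB i)
  · rw [hBdiag.diagonal_diag]
    exact hWVB

end Spectral

section BlockDiagonal

variable {R : Type*} {o : Type*} {m' n' : o → Type*}

theorem blockDiagonal'_mulVec_apply [CommSemiring R] [Fintype o] [DecidableEq o]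
    [∀ k, Fintype (n' k)] (M : ∀ k, Matrix (m' k) (n' k) R) (v : (Σ k, n' k) → R)
    (k : o) (i : m' k) : (blockDiagonal' M *ᵥ v) ⟨k, i⟩ = (M k *ᵥ fun j => v ⟨k, j⟩) i := by
  simp only [mulVec, dotProduct, ← Finset.univ_sigma_univ, Finset.sum_sigma]
  rw [Fintype.sum_eq_single k fun k' hk' => Finset.sum_eq_zero fun j _ => by
    rw [blockDiagonal'_apply_ne _ _ _ hk'.symm, zero_mul]]
  simp

variable [AddZeroClass R] [DecidableEq o] {A A' : Matrix (Σ k, m' k) (Σ k, m' k) R}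
  {N N' : ∀ k, Matrix (m' k) (m' k) R}

theorem submatrix_sigmaMk_eq_of_add_blockDiagonal'_eq
    (h : A + blockDiagonal' N = A' + blockDiagonal' N') {k k' : o} (hkk' : k ≠ k') :
    A.submatrix (Sigma.mk k) (Sigma.mk k') = A'.submatrix (Sigma.mk k) (Sigma.mk k') := by
  ext i j
  simpa [blockDiagonal'_apply_ne _ _ _ hkk'] using congrFun (congrFun h ⟨k, i⟩) ⟨k', j⟩

theorem submatrix_sigmaMk_add_eq_of_add_blockDiagonal'_eq
    (h : A + blockDiagonal' N = A' + blockDiagonal' N') (k : o) :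
    A.submatrix (Sigma.mk k) (Sigma.mk k) + N k
      = A'.submatrix (Sigma.mk k) (Sigma.mk k) + N' k := by
  ext i j
  simpa using congrFun (congrFun h ⟨k, i⟩) ⟨k, j⟩

end BlockDiagonal

end Matrix

namespace SIFA

variable {K : ℕ} {p r : Fin K → ℕ}

theorem blkdiag_eq_blockDiagonal' (V : (k : Fin K) → Matrix (Fin (p k)) (Fin (r k)) ℝ) :
    blkdiag V = blockDiagonal' V := by
  ext ⟨k, i⟩ ⟨k', j⟩
  rcases eq_or_ne k k' with rfl | h
  · simp [blkdiag]
  · simp [blkdiag, blockDiagonal'_apply_ne _ _ _ h, h]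

theorem blkdiag_mul_diagonal_mul_transpose_add_diagonal
    (V : (k : Fin K) → Matrix (Fin (p k)) (Fin (r k)) ℝ) (d : (k : Fin K) → Fin (r k) → ℝ)
    (σ : Fin K → ℝ) :
    blkdiag V * diagonal (fun j : (k : Fin K) × Fin (r k) => d j.1 j.2) * (blkdiag V)ᵀ
        + diagonal (fun i : (k : Fin K) × Fin (p k) => σ i.1)
      = blockDiagonal' fun k => V k * diagonal (d k) * (V k)ᵀ + σ k • 1 := by
  rw [blkdiag_eq_blockDiagonal', ← blockDiagonal'_diagonal, blockDiagonal'_transpose,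
    ← blockDiagonal'_mul, ← blockDiagonal'_mul,
    ← blockDiagonal'_diagonal fun k (_ : Fin (p k)) => σ k, ← blockDiagonal'_add]
  simp only [smul_one_eq_diagonal]
  rfl

theorem mulVec_add_blkdiag_mulVec_sigmaMk {n : Type*} [Fintype n]
    (V₀ : Matrix ((k : Fin K) × Fin (p k)) n ℝ)
    (V : (k : Fin K) → Matrix (Fin (p k)) (Fin (r k)) ℝ) (u : n → ℝ)
    (g : (k : Fin K) → Fin (r k) → ℝ) (k : Fin K) :
    (fun i => (V₀ *ᵥ u + blkdiag V *ᵥ fun j => g j.1 j.2) ⟨k, i⟩)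
      = V₀.submatrix (Sigma.mk k) id *ᵥ u + V k *ᵥ g k := by
  funext i
  simp only [Pi.add_apply, blkdiag_eq_blockDiagonal', blockDiagonal'_mulVec_apply]
  rfl

section Block

variable {ι κ a b a' b' c c' : Type*} [Fintype ι] [DecidableEq ι] [Fintype κ] [DecidableEq κ]
  [Fintype a] [Fintype b] [Fintype a'] [Fintype b'] [Fintype c] [Fintype c'] [DecidableEq a]
  [DecidableEq b] [DecidableEq a'] [DecidableEq b'] [DecidableEq c] [DecidableEq c']
  {W : Matrix ι a ℝ} {V : Matrix ι b ℝ} {W' : Matrix ι a' ℝ} {V' : Matrix ι b' ℝ}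
  {U : Matrix κ a ℝ} {X : Matrix κ c ℝ} {U' : Matrix κ a' ℝ} {X' : Matrix κ c' ℝ}
  {d₀ : a → ℝ} {d : b → ℝ} {e₀ : a' → ℝ} {e : b' → ℝ}

/-- `U`, `U'` are the joint loadings of another block: the cross-covariance with it forces `W` and
`W'` to have the same column space. -/
theorem block_covariance_eq (hWV : Injective (fromCols W V).mulVec)
    (hWV' : Injective (fromCols W' V').mulVec) (hUX : Injective (fromCols U X).mulVec)
    (hUX' : Injective (fromCols U' X').mulVec) (hd₀ : ∀ i, 0 < d₀ i) (hd : ∀ i, 0 < d i)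
    (he₀ : ∀ i, 0 < e₀ i) (he : ∀ i, 0 < e i)
    (hcard : Fintype.card a + Fintype.card b < Fintype.card ι)
    (hcard' : Fintype.card a' + Fintype.card b' < Fintype.card ι) {σ σ' : ℝ}
    (hcross : W * diagonal d₀ * Uᵀ = W' * diagonal e₀ * U'ᵀ)
    (hdiag : W * diagonal d₀ * Wᵀ + (V * diagonal d * Vᵀ + σ • 1)
      = W' * diagonal e₀ * W'ᵀ + (V' * diagonal e * V'ᵀ + σ' • 1)) :
    σ' = σ ∧ W * diagonal d₀ * Wᵀ = W' * diagonal e₀ * W'ᵀ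
      ∧ V * diagonal d * Vᵀ = V' * diagonal e * V'ᵀ := by
  rw [← add_assoc, ← add_assoc] at hdiag
  obtain rfl : σ' = σ := le_antisymm
    (le_of_add_mul_diagonal_mul_transpose_add_smul_one_eq hcard (fun i => (he₀ i).le)
      (fun i => (he i).le) hdiag)
    (le_of_add_mul_diagonal_mul_transpose_add_smul_one_eq hcard' (fun i => (hd₀ i).le)
      (fun i => (hd i).le) hdiag.symm)
  have hcov := add_right_cancel hdiag
  obtain ⟨L, hL, -⟩ := exists_mul_eq_one_and_mul_eq_zero_of_injective_fromCols hUX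
  obtain ⟨L', hL', -⟩ := exists_mul_eq_one_and_mul_eq_zero_of_injective_fromCols hUX'
  have hjoint := mul_diagonal_mul_transpose_eq_of_add_eq hWV hWV'
    (exists_eq_mul_of_mul_diagonal_mul_transpose_eq hL' (fun i => (he₀ i).ne') hcross.symm)
    (exists_eq_mul_of_mul_diagonal_mul_transpose_eq hL (fun i => (hd₀ i).ne') hcross)
    (fun i => (hd i).le) (fun i => (he i).le) hcov
  exact ⟨rfl, hjoint, add_left_cancel (hjoint ▸ hcov)⟩

end Block

theorem eq_mul_of_eq_mul_of_sign {s x y : ℝ} (hs : s = 1 ∨ s = -1) (h : x = s * y) :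
    y = s * x := by
  rcases hs with rfl | rfl <;> linarith

theorem eq_sign_mul_of_mulVec_add_mulVec_eq {ι : Type*} [Fintype ι] {r₀ r r₀' r' : ℕ}
    {W : Matrix ι (Fin r₀) ℝ} {V : Matrix ι (Fin r) ℝ} {W' : Matrix ι (Fin r₀') ℝ}
    {V' : Matrix ι (Fin r') ℝ} (hWV : Injective (fromCols W V).mulVec) (h₀ : r₀' = r₀)
    (h : r' = r) {s₀ : Fin r₀ → ℝ} {s : Fin r → ℝ} (hs₀ : ∀ i, s₀ i = 1 ∨ s₀ i = -1)
    (hs : ∀ i, s i = 1 ∨ s i = -1) (hW' : W'.submatrix id (Fin.cast h₀.symm) = W * diagonal s₀)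
    (hV' : V'.submatrix id (Fin.cast h.symm) = V * diagonal s)
    {u₀ : Fin r₀ → ℝ} {u : Fin r → ℝ} {u₀' : Fin r₀' → ℝ} {u' : Fin r' → ℝ}
    (hu : W *ᵥ u₀ + V *ᵥ u = W' *ᵥ u₀' + V' *ᵥ u') :
    (∀ i, u₀' (Fin.cast h₀.symm i) = s₀ i * u₀ i) ∧ ∀ i, u' (Fin.cast h.symm i) = s i * u i := by
  subst h₀ h
  simp only [Fin.cast_refl, submatrix_id_id, id] at hW' hV' ⊢
  subst hW' hV'
  rw [← mulVec_mulVec, ← mulVec_mulVec, ← fromCols_mulVec_sumElim,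
    ← fromCols_mulVec_sumElim] at hu
  obtain ⟨hu₀, hu⟩ := Sum.elim_eq_iff.mp (hWV hu)
  exact ⟨fun i => eq_mul_of_eq_mul_of_sign (hs₀ i) ((congrFun hu₀ i).trans (mulVec_diagonal _ _ i)),
    fun i => eq_mul_of_eq_mul_of_sign (hs i) ((congrFun hu i).trans (mulVec_diagonal _ _ i))⟩

end SIFA

theorem stmt_0_general {K q : ℕ} (hK : 2 ≤ K) {p : Fin K → ℕ}
    {r0 : ℕ} {r : Fin K → ℕ} {rh0 : ℕ} {rh : Fin K → ℕ}
    -- parameter set θ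
    (V0 : Matrix ((k : Fin K) × Fin (p k)) (Fin r0) ℝ)
    (V : (k : Fin K) → Matrix (Fin (p k)) (Fin (r k)) ℝ)
    (d0 : Fin r0 → ℝ) (d : (k : Fin K) → Fin (r k) → ℝ)
    (σ : Fin K → ℝ)
    (f0 : (Fin q → ℝ) → Fin r0 → ℝ) (f : (k : Fin K) → (Fin q → ℝ) → Fin (r k) → ℝ)
    -- parameter set θ̂
    (Vh0 : Matrix ((k : Fin K) × Fin (p k)) (Fin rh0) ℝ)
    (Vh : (k : Fin K) → Matrix (Fin (p k)) (Fin (rh k)) ℝ)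
    (dh0 : Fin rh0 → ℝ) (dh : (k : Fin K) → Fin (rh k) → ℝ)
    (σh : Fin K → ℝ)
    (fh0 : (Fin q → ℝ) → Fin rh0 → ℝ) (fh : (k : Fin K) → (Fin q → ℝ) → Fin (rh k) → ℝ)
    -- basic conditions for θ
    (hV0 : V0ᵀ * V0 = 1) (hV : ∀ k, (V k)ᵀ * V k = 1)
    (hd0anti : StrictAnti d0) (hd0pos : ∀ i, 0 < d0 i)
    (hdanti : ∀ k, StrictAnti (d k)) (hdpos : ∀ k i, 0 < d k i)
    -- condition A2 for θ
    (hA2 : ∀ k, LinearIndependent ℝ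
        (fun j => (Matrix.fromCols (Matrix.of fun (i : Fin (p k)) l => V0 ⟨k, i⟩ l)
          (V k))ᵀ j)
      ∧ r0 + r k < p k)
    -- basic conditions for θ̂
    (hVh0 : Vh0ᵀ * Vh0 = 1) (hVh : ∀ k, (Vh k)ᵀ * Vh k = 1)
    (hdh0anti : StrictAnti dh0) (hdh0pos : ∀ i, 0 < dh0 i)
    (hdhanti : ∀ k, StrictAnti (dh k)) (hdhpos : ∀ k i, 0 < dh k i)
    -- condition A2 for θ̂
    (hA2h : ∀ k, LinearIndependent ℝ
        (fun j => (Matrix.fromCols (Matrix.of fun (i : Fin (p k)) l => Vh0 ⟨k, i⟩ l)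
          (Vh k))ᵀ j)
      ∧ rh0 + rh k < p k)
    -- observational equivalence: equal grand covariance Σ⋆
    (hcov : V0 * Matrix.diagonal d0 * V0ᵀ
        + blkdiag V * Matrix.diagonal (fun j : (k : Fin K) × Fin (r k) => d j.1 j.2)
          * (blkdiag V)ᵀ
        + Matrix.diagonal (fun i : (k : Fin K) × Fin (p k) => σ i.1)
      = Vh0 * Matrix.diagonal dh0 * Vh0ᵀ
        + blkdiag Vh * Matrix.diagonal (fun j : (k : Fin K) × Fin (rh k) => dh j.1 j.2)
          * (blkdiag Vh)ᵀ
        + Matrix.diagonal (fun i : (k : Fin K) × Fin (p k) => σh i.1))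
    -- observational equivalence: equal mean function μ⋆
    (hmean : ∀ x : Fin q → ℝ,
      V0 *ᵥ f0 x + blkdiag V *ᵥ (fun j => f j.1 x j.2)
        = Vh0 *ᵥ fh0 x + blkdiag Vh *ᵥ (fun j => fh j.1 x j.2)) :
    ∃ (h0 : rh0 = r0) (hk : ∀ k, rh k = r k),
      (∀ k, σh k = σ k) ∧
      (∀ i : Fin r0, dh0 (Fin.cast h0.symm i) = d0 i) ∧
      (∀ k (i : Fin (r k)), dh k (Fin.cast (hk k).symm i) = d k i) ∧
      ∃ (s0 : Fin r0 → ℝ) (s : (k : Fin K) → Fin (r k) → ℝ),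
        (∀ i, s0 i = 1 ∨ s0 i = -1) ∧
        (∀ k i, s k i = 1 ∨ s k i = -1) ∧
        Vh0.submatrix id (Fin.cast h0.symm) = V0 * Matrix.diagonal s0 ∧
        (∀ k, (Vh k).submatrix id (Fin.cast (hk k).symm)
          = V k * Matrix.diagonal (s k)) ∧
        (∀ x (i : Fin r0), fh0 x (Fin.cast h0.symm i) = s0 i * f0 x i) ∧
        (∀ k x (i : Fin (r k)),
          fh k x (Fin.cast (hk k).symm i) = s k i * f k x i) := by
  have hinj k : Injective (fromCols (V0.submatrix (Sigma.mk k) id) (V k)).mulVec :=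
    mulVec_injective_iff.mpr (hA2 k).1
  have hinjh k : Injective (fromCols (Vh0.submatrix (Sigma.mk k) id) (Vh k)).mulVec :=
    mulVec_injective_iff.mpr (hA2h k).1
  rw [add_assoc, add_assoc, SIFA.blkdiag_mul_diagonal_mul_transpose_add_diagonal,
    SIFA.blkdiag_mul_diagonal_mul_transpose_add_diagonal] at hcov
  have : Nontrivial (Fin K) := Fin.nontrivial_iff_two_le.mpr hK
  choose k' hk' using fun k : Fin K => exists_ne k
  have hblock (k : Fin K) := SIFA.block_covariance_eq (hinj k) (hinjh k) (hinj (k' k))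
    (hinjh (k' k)) hd0pos (hdpos k) hdh0pos (hdhpos k) (by simpa using (hA2 k).2)
    (by simpa using (hA2h k).2) (submatrix_sigmaMk_eq_of_add_blockDiagonal'_eq hcov (hk' k).symm)
    (submatrix_sigmaMk_add_eq_of_add_blockDiagonal'_eq hcov k)
  have hjoint : V0 * diagonal d0 * V0ᵀ = Vh0 * diagonal dh0 * Vh0ᵀ := by
    ext ⟨k, i⟩ ⟨k', j⟩
    rcases eq_or_ne k k' with rfl | hkk'
    · exact congrFun (congrFun (hblock k).2.1 i) j
    · exact congrFun (congrFun (submatrix_sigmaMk_eq_of_add_blockDiagonal'_eq hcov hkk') i) j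
  obtain ⟨h0, hd0, s0, hs0, hVs0⟩ := exists_signs_of_mul_diagonal_mul_transpose_eq hV0 hVh0
    hd0anti (fun i => (hd0pos i).ne') hdh0anti (fun i => (hdh0pos i).ne') hjoint
  choose hr hd s hs hVs using fun k => exists_signs_of_mul_diagonal_mul_transpose_eq (hV k)
    (hVh k) (hdanti k) (fun i => (hdpos k i).ne') (hdhanti k) (fun i => (hdhpos k i).ne')
    (hblock k).2.2
  have hf (k : Fin K) x := SIFA.eq_sign_mul_of_mulVec_add_mulVec_eq (hinj k) h0 (hr k) hs0 (hs k)
    (W' := Vh0.submatrix (Sigma.mk k) id) (congrArg (·.submatrix (Sigma.mk k) id) hVs0) (hVs k)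
    ((SIFA.mulVec_add_blkdiag_mulVec_sigmaMk V0 V (f0 x) (fun k => f k x) k).symm.trans <|
      (congrArg (fun v i => v ⟨k, i⟩) (hmean x)).trans <|
        SIFA.mulVec_add_blkdiag_mulVec_sigmaMk Vh0 Vh (fh0 x) (fun k => fh k x) k)
  exact ⟨h0, hr, fun k => (hblock k).1, hd0, hd, s0, s, hs0, hs, hVs0, hVs,
    fun x => (hf ⟨0, by omega⟩ x).1, fun k x => (hf k x).2⟩

/-- Identifiability of the SIFA model under the general conditions (Proposition 2.1, first
part): if two parameter sets `θ` and `θ̂`, both satisfying the basic conditions and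
conditions A1, A2, are observationally equivalent (equal mean function `μ⋆` and equal grand
covariance `Σ⋆`), then they have the same ranks, the same noise variances, the same diagonal
covariances, and the loadings and mean functions agree up to diagonal sign matrices `Sₖ`:
`V̂ₖ = Vₖ Sₖ` and `f̂ₖ(x) = Sₖ fₖ(x)`. -/
theorem stmt_0 {K q : ℕ} (hK : 2 ≤ K) {p : Fin K → ℕ}
    {r0 : ℕ} {r : Fin K → ℕ} {rh0 : ℕ} {rh : Fin K → ℕ}
    -- parameter set θ
    (V0 : Matrix ((k : Fin K) × Fin (p k)) (Fin r0) ℝ)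
    (V : (k : Fin K) → Matrix (Fin (p k)) (Fin (r k)) ℝ)
    (d0 : Fin r0 → ℝ) (d : (k : Fin K) → Fin (r k) → ℝ)
    (σ : Fin K → ℝ)
    (f0 : (Fin q → ℝ) → Fin r0 → ℝ) (f : (k : Fin K) → (Fin q → ℝ) → Fin (r k) → ℝ)
    -- parameter set θ̂
    (Vh0 : Matrix ((k : Fin K) × Fin (p k)) (Fin rh0) ℝ)
    (Vh : (k : Fin K) → Matrix (Fin (p k)) (Fin (rh k)) ℝ)
    (dh0 : Fin rh0 → ℝ) (dh : (k : Fin K) → Fin (rh k) → ℝ)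
    (σh : Fin K → ℝ)
    (fh0 : (Fin q → ℝ) → Fin rh0 → ℝ) (fh : (k : Fin K) → (Fin q → ℝ) → Fin (rh k) → ℝ)
    -- basic conditions for θ
    (hV0 : V0ᵀ * V0 = 1) (hV : ∀ k, (V k)ᵀ * V k = 1)
    (hd0anti : StrictAnti d0) (hd0pos : ∀ i, 0 < d0 i)
    (hdanti : ∀ k, StrictAnti (d k)) (hdpos : ∀ k i, 0 < d k i)
    (hσ : ∀ k, 0 < σ k)
    -- condition A1 for θ: each block of V₀ has full column rank
    (hA1 : ∀ k, (Matrix.of fun (i : Fin (p k)) j => V0 ⟨k, i⟩ j).rank = r0)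
    -- condition A2 for θ
    (hA2 : ∀ k, LinearIndependent ℝ
        (fun j => (Matrix.fromCols (Matrix.of fun (i : Fin (p k)) l => V0 ⟨k, i⟩ l)
          (V k))ᵀ j)
      ∧ r0 + r k < p k)
    -- basic conditions for θ̂
    (hVh0 : Vh0ᵀ * Vh0 = 1) (hVh : ∀ k, (Vh k)ᵀ * Vh k = 1)
    (hdh0anti : StrictAnti dh0) (hdh0pos : ∀ i, 0 < dh0 i)
    (hdhanti : ∀ k, StrictAnti (dh k)) (hdhpos : ∀ k i, 0 < dh k i)
    (hσh : ∀ k, 0 < σh k)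
    -- condition A1 for θ̂
    (hA1h : ∀ k, (Matrix.of fun (i : Fin (p k)) j => Vh0 ⟨k, i⟩ j).rank = rh0)
    -- condition A2 for θ̂
    (hA2h : ∀ k, LinearIndependent ℝ
        (fun j => (Matrix.fromCols (Matrix.of fun (i : Fin (p k)) l => Vh0 ⟨k, i⟩ l)
          (Vh k))ᵀ j)
      ∧ rh0 + rh k < p k)
    -- observational equivalence: equal grand covariance Σ⋆
    (hcov : V0 * Matrix.diagonal d0 * V0ᵀ
        + blkdiag V * Matrix.diagonal (fun j : (k : Fin K) × Fin (r k) => d j.1 j.2)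
          * (blkdiag V)ᵀ
        + Matrix.diagonal (fun i : (k : Fin K) × Fin (p k) => σ i.1)
      = Vh0 * Matrix.diagonal dh0 * Vh0ᵀ
        + blkdiag Vh * Matrix.diagonal (fun j : (k : Fin K) × Fin (rh k) => dh j.1 j.2)
          * (blkdiag Vh)ᵀ
        + Matrix.diagonal (fun i : (k : Fin K) × Fin (p k) => σh i.1))
    -- observational equivalence: equal mean function μ⋆
    (hmean : ∀ x : Fin q → ℝ,
      V0 *ᵥ f0 x + blkdiag V *ᵥ (fun j => f j.1 x j.2)
        = Vh0 *ᵥ fh0 x + blkdiag Vh *ᵥ (fun j => fh j.1 x j.2)) :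
    ∃ (h0 : rh0 = r0) (hk : ∀ k, rh k = r k),
      (∀ k, σh k = σ k) ∧
      (∀ i : Fin r0, dh0 (Fin.cast h0.symm i) = d0 i) ∧
      (∀ k (i : Fin (r k)), dh k (Fin.cast (hk k).symm i) = d k i) ∧
      ∃ (s0 : Fin r0 → ℝ) (s : (k : Fin K) → Fin (r k) → ℝ),
        (∀ i, s0 i = 1 ∨ s0 i = -1) ∧
        (∀ k i, s k i = 1 ∨ s k i = -1) ∧
        Vh0.submatrix id (Fin.cast h0.symm) = V0 * Matrix.diagonal s0 ∧
        (∀ k, (Vh k).submatrix id (Fin.cast (hk k).symm)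
          = V k * Matrix.diagonal (s k)) ∧
        (∀ x (i : Fin r0), fh0 x (Fin.cast h0.symm i) = s0 i * f0 x i) ∧
        (∀ k x (i : Fin (r k)),
          fh k x (Fin.cast (hk k).symm i) = s k i * f k x i) :=
  stmt_0_general hK V0 V d0 d σ f0 f Vh0 Vh dh0 dh σh fh0 fh hV0 hV hd0anti hd0pos hdanti hdpos hA2
    hVh0 hVh hdh0anti hdh0pos hdhanti hdhpos hA2h hcov hmean
end

section
/- Minimality of the joint rank (Proposition 2.1, second part): Fix K ≥ 2 and block dimensions p_1,…,p_K. Let θ_0 be a parameter set satisfying the basic conditions, condition A1 and condition A2, with joint rank r_0. Then every parameter set θ satisfying the basic conditions (not necessarily A1 or A2) that is observationally equivalent to θ_0 has joint rank at least r_0; that is, its joint loading matrix has at least r_0 columns. -/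
open Matrix

/-! For `k ≠ l` the `(k, l)` block of `Σ⋆` sees neither the block-diagonal individual part
`V⋆ Σ_F V⋆ᵀ` nor the noise `Σ_E`, so it equals `V₀ₖ Σ₀ V₀ₗᵀ`. Under A1 both `V₀ₖ` and `V₀ₗ` have
full column rank `r₀`, so this block has rank exactly `r₀`; for any other parameter set it
factors through `ℝ^{rh0}` and has rank at most `rh0`. With `K ≥ 2` such a block exists. -/

namespace Matrix

variable {m n o : Type*} [Fintype n] [Fintype o] {F : Type*} [Field F]

theorem rank_mul_eq_left_of_rank_eq_card (A : Matrix m n F) {C : Matrix n o F}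
    (hC : C.rank = Fintype.card n) : (A * C).rank = A.rank := by
  have hsurj : LinearMap.range C.mulVecLin = ⊤ := by
    apply Submodule.eq_top_of_finrank_eq
    rw [Module.finrank_fintype_fun_eq_card]
    exact hC
  rw [rank, rank, mulVecLin_mul, LinearMap.range_comp_of_range_eq_top _ hsurj]

theorem rank_mul_diagonal_mul_transpose [DecidableEq n] {A : Matrix m n F}
    {B : Matrix o n F} {d : n → F} (hd : ∀ i, d i ≠ 0) (hA : A.rank = Fintype.card n)
    (hB : B.rank = Fintype.card n) : (A * diagonal d * Bᵀ).rank = Fintype.card n := by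
  have hdB : (diagonal d * Bᵀ).rank = Fintype.card n := by
    have hdet : IsUnit (diagonal d).det := by
      simpa [det_diagonal, Finset.prod_ne_zero_iff] using hd
    rw [rank_mul_eq_right_of_isUnit_det _ _ hdet, rank_transpose, hB]
  rw [Matrix.mul_assoc, rank_mul_eq_left_of_rank_eq_card A hdB, hA]

theorem diagonal_submatrix_sigmaMk_of_ne {ι α : Type*} {β : ι → Type*}
    [DecidableEq ((i : ι) × β i)] [Zero α] (s : ((i : ι) × β i) → α) {k l : ι} (hkl : k ≠ l) :
    (diagonal s).submatrix (Sigma.mk k) (Sigma.mk l) = 0 := by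
  ext i j
  exact diagonal_apply_ne _ fun h => hkl (congrArg Sigma.fst h)

end Matrix

section BlockCovariance

variable {K : ℕ} {p : Fin K → ℕ}

/-- The grand covariance `Σ⋆`; here `σ k` stands for the noise variance `σ_k²`. -/
def grandCovariance {r0 : ℕ} {r : Fin K → ℕ} (V0 : Matrix ((k : Fin K) × Fin (p k)) (Fin r0) ℝ)
    (d0 : Fin r0 → ℝ) (V : (k : Fin K) → Matrix (Fin (p k)) (Fin (r k)) ℝ)
    (d : (k : Fin K) → Fin (r k) → ℝ) (σ : Fin K → ℝ) :
    Matrix ((k : Fin K) × Fin (p k)) ((k : Fin K) × Fin (p k)) ℝ :=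
  V0 * diagonal d0 * V0ᵀ
    + blkdiag V * diagonal (fun j : (k : Fin K) × Fin (r k) => d j.1 j.2) * (blkdiag V)ᵀ
    + diagonal (fun i : (k : Fin K) × Fin (p k) => σ i.1)

theorem blkdiag_mul_diagonal_mul_transpose_submatrix_of_ne {r : Fin K → ℕ}
    (V : (k : Fin K) → Matrix (Fin (p k)) (Fin (r k)) ℝ) (e : ((k : Fin K) × Fin (r k)) → ℝ)
    {k l : Fin K} (hkl : k ≠ l) :
    (blkdiag V * diagonal e * (blkdiag V)ᵀ).submatrix (Sigma.mk k) (Sigma.mk l) = 0 := by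
  ext i j
  rw [submatrix_apply, Matrix.zero_apply, mul_apply]
  refine Finset.sum_eq_zero fun c _ => ?_
  rw [mul_diagonal, transpose_apply]
  by_cases hkc : k = c.1
  · have hlc : l ≠ c.1 := fun h => hkl (hkc.trans h.symm)
    simp [blkdiag, hlc]
  · simp [blkdiag, hkc]

theorem grandCovariance_submatrix_of_ne {r0 : ℕ} {r : Fin K → ℕ}
    (V0 : Matrix ((k : Fin K) × Fin (p k)) (Fin r0) ℝ) (d0 : Fin r0 → ℝ)
    (V : (k : Fin K) → Matrix (Fin (p k)) (Fin (r k)) ℝ) (d : (k : Fin K) → Fin (r k) → ℝ)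
    (σ : Fin K → ℝ) {k l : Fin K} (hkl : k ≠ l) :
    (grandCovariance V0 d0 V d σ).submatrix (Sigma.mk k) (Sigma.mk l)
      = V0.submatrix (Sigma.mk k) id * diagonal d0 * (V0.submatrix (Sigma.mk l) id)ᵀ := by
  simp only [grandCovariance, submatrix_add, Pi.add_apply]
  rw [blkdiag_mul_diagonal_mul_transpose_submatrix_of_ne V _ hkl,
    diagonal_submatrix_sigmaMk_of_ne _ hkl, add_zero, add_zero, transpose_submatrix,
    submatrix_mul _ _ _ id _ Function.bijective_id, submatrix_mul _ _ _ id _ Function.bijective_id,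
    submatrix_id_id]

theorem rank_grandCovariance_submatrix_le {r0 : ℕ} {r : Fin K → ℕ}
    (V0 : Matrix ((k : Fin K) × Fin (p k)) (Fin r0) ℝ) (d0 : Fin r0 → ℝ)
    (V : (k : Fin K) → Matrix (Fin (p k)) (Fin (r k)) ℝ) (d : (k : Fin K) → Fin (r k) → ℝ)
    (σ : Fin K → ℝ) {k l : Fin K} (hkl : k ≠ l) :
    ((grandCovariance V0 d0 V d σ).submatrix (Sigma.mk k) (Sigma.mk l)).rank ≤ r0 := by
  rw [grandCovariance_submatrix_of_ne V0 d0 V d σ hkl]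
  exact (rank_mul_le_left _ _).trans (rank_le_width _)

theorem rank_grandCovariance_submatrix_eq {r0 : ℕ} {r : Fin K → ℕ}
    {V0 : Matrix ((k : Fin K) × Fin (p k)) (Fin r0) ℝ} {d0 : Fin r0 → ℝ}
    (V : (k : Fin K) → Matrix (Fin (p k)) (Fin (r k)) ℝ) (d : (k : Fin K) → Fin (r k) → ℝ)
    (σ : Fin K → ℝ) (hd0 : ∀ i, d0 i ≠ 0) {k l : Fin K} (hkl : k ≠ l)
    (hk : (V0.submatrix (Sigma.mk k) id).rank = r0)
    (hl : (V0.submatrix (Sigma.mk l) id).rank = r0) :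
    ((grandCovariance V0 d0 V d σ).submatrix (Sigma.mk k) (Sigma.mk l)).rank = r0 := by
  rw [grandCovariance_submatrix_of_ne V0 d0 V d σ hkl]
  simpa only [Fintype.card_fin] using rank_mul_diagonal_mul_transpose hd0
    (hk.trans (Fintype.card_fin r0).symm) (hl.trans (Fintype.card_fin r0).symm)

end BlockCovariance

theorem stmt_1_general {K : ℕ} (hK : 2 ≤ K) {p : Fin K → ℕ}
    {r0 : ℕ} {r : Fin K → ℕ} {rh0 : ℕ} {rh : Fin K → ℕ}
    -- parameter set θ₀
    (V0 : Matrix ((k : Fin K) × Fin (p k)) (Fin r0) ℝ)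
    (V : (k : Fin K) → Matrix (Fin (p k)) (Fin (r k)) ℝ)
    (d0 : Fin r0 → ℝ) (d : (k : Fin K) → Fin (r k) → ℝ)
    (σ : Fin K → ℝ)
    -- parameter set θ
    (Vh0 : Matrix ((k : Fin K) × Fin (p k)) (Fin rh0) ℝ)
    (Vh : (k : Fin K) → Matrix (Fin (p k)) (Fin (rh k)) ℝ)
    (dh0 : Fin rh0 → ℝ) (dh : (k : Fin K) → Fin (rh k) → ℝ)
    (σh : Fin K → ℝ)
    -- basic conditions for θ₀
    (hd0pos : ∀ i, 0 < d0 i)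
    -- condition A1 for θ₀: each block of V₀ has full column rank
    (hA1 : ∀ k, (Matrix.of fun (i : Fin (p k)) j => V0 ⟨k, i⟩ j).rank = r0)
    -- observational equivalence: equal grand covariance Σ⋆
    (hcov : V0 * Matrix.diagonal d0 * V0ᵀ
        + blkdiag V * Matrix.diagonal (fun j : (k : Fin K) × Fin (r k) => d j.1 j.2)
          * (blkdiag V)ᵀ
        + Matrix.diagonal (fun i : (k : Fin K) × Fin (p k) => σ i.1)
      = Vh0 * Matrix.diagonal dh0 * Vh0ᵀ
        + blkdiag Vh * Matrix.diagonal (fun j : (k : Fin K) × Fin (rh k) => dh j.1 j.2)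
          * (blkdiag Vh)ᵀ
        + Matrix.diagonal (fun i : (k : Fin K) × Fin (p k) => σh i.1)) :
    r0 ≤ rh0 := by
  let k : Fin K := ⟨0, by omega⟩
  let l : Fin K := ⟨1, by omega⟩
  have hkl : k ≠ l := by simp [k, l, Fin.ext_iff]
  have hcov' : grandCovariance V0 d0 V d σ = grandCovariance Vh0 dh0 Vh dh σh := hcov
  calc r0 = ((grandCovariance V0 d0 V d σ).submatrix (Sigma.mk k) (Sigma.mk l)).rank :=
        (rank_grandCovariance_submatrix_eq V d σ (fun i => (hd0pos i).ne') hkl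
          (hA1 k) (hA1 l)).symm
    _ = ((grandCovariance Vh0 dh0 Vh dh σh).submatrix (Sigma.mk k) (Sigma.mk l)).rank := by
        rw [hcov']
    _ ≤ rh0 := rank_grandCovariance_submatrix_le Vh0 dh0 Vh dh σh hkl

/-- Minimality of the joint rank (Proposition 2.1, second part): if `θ₀` satisfies the basic
conditions together with conditions A1 and A2 and has joint rank `r₀`, then every parameter
set satisfying the basic conditions that is observationally equivalent to `θ₀` (equal mean
function `μ⋆` and equal grand covariance `Σ⋆`) has joint rank at least `r₀`. -/
theorem stmt_1 {K q : ℕ} (hK : 2 ≤ K) {p : Fin K → ℕ}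
    {r0 : ℕ} {r : Fin K → ℕ} {rh0 : ℕ} {rh : Fin K → ℕ}
    -- parameter set θ₀
    (V0 : Matrix ((k : Fin K) × Fin (p k)) (Fin r0) ℝ)
    (V : (k : Fin K) → Matrix (Fin (p k)) (Fin (r k)) ℝ)
    (d0 : Fin r0 → ℝ) (d : (k : Fin K) → Fin (r k) → ℝ)
    (σ : Fin K → ℝ)
    (f0 : (Fin q → ℝ) → Fin r0 → ℝ) (f : (k : Fin K) → (Fin q → ℝ) → Fin (r k) → ℝ)
    -- parameter set θ
    (Vh0 : Matrix ((k : Fin K) × Fin (p k)) (Fin rh0) ℝ)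
    (Vh : (k : Fin K) → Matrix (Fin (p k)) (Fin (rh k)) ℝ)
    (dh0 : Fin rh0 → ℝ) (dh : (k : Fin K) → Fin (rh k) → ℝ)
    (σh : Fin K → ℝ)
    (fh0 : (Fin q → ℝ) → Fin rh0 → ℝ) (fh : (k : Fin K) → (Fin q → ℝ) → Fin (rh k) → ℝ)
    -- basic conditions for θ₀
    (hV0 : V0ᵀ * V0 = 1) (hV : ∀ k, (V k)ᵀ * V k = 1)
    (hd0anti : StrictAnti d0) (hd0pos : ∀ i, 0 < d0 i)
    (hdanti : ∀ k, StrictAnti (d k)) (hdpos : ∀ k i, 0 < d k i)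
    (hσ : ∀ k, 0 < σ k)
    -- condition A1 for θ₀: each block of V₀ has full column rank
    (hA1 : ∀ k, (Matrix.of fun (i : Fin (p k)) j => V0 ⟨k, i⟩ j).rank = r0)
    -- condition A2 for θ₀: columns of V₀ₖ and Vₖ are jointly linearly independent,
    -- and r₀ + rₖ < pₖ
    (hA2 : ∀ k, LinearIndependent ℝ
        (fun j => (Matrix.fromCols (Matrix.of fun (i : Fin (p k)) l => V0 ⟨k, i⟩ l)
          (V k))ᵀ j)
      ∧ r0 + r k < p k)
    -- basic conditions for θ
    (hVh0 : Vh0ᵀ * Vh0 = 1) (hVh : ∀ k, (Vh k)ᵀ * Vh k = 1)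
    (hdh0anti : StrictAnti dh0) (hdh0pos : ∀ i, 0 < dh0 i)
    (hdhanti : ∀ k, StrictAnti (dh k)) (hdhpos : ∀ k i, 0 < dh k i)
    (hσh : ∀ k, 0 < σh k)
    -- observational equivalence: equal grand covariance Σ⋆
    (hcov : V0 * Matrix.diagonal d0 * V0ᵀ
        + blkdiag V * Matrix.diagonal (fun j : (k : Fin K) × Fin (r k) => d j.1 j.2)
          * (blkdiag V)ᵀ
        + Matrix.diagonal (fun i : (k : Fin K) × Fin (p k) => σ i.1)
      = Vh0 * Matrix.diagonal dh0 * Vh0ᵀ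
        + blkdiag Vh * Matrix.diagonal (fun j : (k : Fin K) × Fin (rh k) => dh j.1 j.2)
          * (blkdiag Vh)ᵀ
        + Matrix.diagonal (fun i : (k : Fin K) × Fin (p k) => σh i.1))
    -- observational equivalence: equal mean function μ⋆
    (hmean : ∀ x : Fin q → ℝ,
      V0 *ᵥ f0 x + blkdiag V *ᵥ (fun j => f j.1 x j.2)
        = Vh0 *ᵥ fh0 x + blkdiag Vh *ᵥ (fun j => fh j.1 x j.2)) :
    r0 ≤ rh0 :=
  stmt_1_general hK V0 V d0 d σ Vh0 Vh dh0 dh σh hd0pos hA1 hcov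
end

section
/- Equal noise variance step: Let p > 0, and let W ∈ ℝ^{p×r} and Ŵ ∈ ℝ^{p×r̂} have full column rank with r < p and r̂ < p. Let D ∈ ℝ^{r×r} and D̂ ∈ ℝ^{r̂×r̂} be symmetric positive definite, and let σ², τ² > 0. If W D Wᵀ + σ² I_p = Ŵ D̂ Ŵᵀ + τ² I_p, then σ² = τ² (equivalently, σ² equals the smallest eigenvalue of the common matrix), and consequently W D Wᵀ = Ŵ D̂ Ŵᵀ. -/
open Matrix

lemma Matrix.exists_ne_zero_mulVec_eq_zero_of_card_lt {K m n : Type*} [Field K] [Fintype m]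
    [Fintype n] (A : Matrix m n K) (h : Fintype.card m < Fintype.card n) :
    ∃ x, x ≠ 0 ∧ A *ᵥ x = 0 := by
  obtain ⟨x, hx, hx0⟩ := Submodule.exists_mem_ne_zero_of_ne_bot
    (LinearMap.ker_ne_bot_of_finrank_lt (f := A.mulVecLin) (by simpa using h))
  exact ⟨x, hx0, hx⟩

lemma Matrix.exists_ne_zero_mul_mul_transpose_mulVec_eq_zero {K m n : Type*} [Field K]
    [Fintype m] [Fintype n] (W : Matrix m n K) (D : Matrix n n K)
    (h : Fintype.card n < Fintype.card m) :
    ∃ x, x ≠ 0 ∧ (W * D * Wᵀ) *ᵥ x = 0 := by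
  obtain ⟨x, hx0, hx⟩ := Wᵀ.exists_ne_zero_mulVec_eq_zero_of_card_lt h
  exact ⟨x, hx0, by rw [← mulVec_mulVec, hx, mulVec_zero]⟩

/-- `σ - τ` is an eigenvalue of the positive semidefinite `B`, with eigenvector `x`. -/
lemma le_of_add_smul_one_eq_of_mulVec_eq_zero {n : Type*} [Fintype n] [DecidableEq n]
    {A B : Matrix n n ℝ} (hB : B.PosSemidef) {σ τ : ℝ} (h : A + σ • 1 = B + τ • 1)
    {x : n → ℝ} (hx0 : x ≠ 0) (hAx : A *ᵥ x = 0) : τ ≤ σ := by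
  have hBx : B *ᵥ x = (σ - τ) • x := by
    have := congrArg (· *ᵥ x) h
    simp only [add_mulVec, smul_mulVec, one_mulVec, hAx, zero_add] at this
    rw [sub_smul, this, add_sub_cancel_right]
  have hxx : 0 < x ⬝ᵥ x := by
    simpa using dotProduct_star_self_pos_iff.mpr hx0
  have hquad : 0 ≤ (σ - τ) * (x ⬝ᵥ x) := by
    simpa [hBx, dotProduct_smul] using hB.dotProduct_mulVec_nonneg x
  exact sub_nonneg.mp (nonneg_of_mul_nonneg_left hquad hxx)

theorem stmt_2_general {p r rhat : ℕ} (hr : r < p) (hrhat : rhat < p)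
    (W : Matrix (Fin p) (Fin r) ℝ) (What : Matrix (Fin p) (Fin rhat) ℝ)
    (D : Matrix (Fin r) (Fin r) ℝ) (Dhat : Matrix (Fin rhat) (Fin rhat) ℝ)
    (hD : D.PosDef) (hDhat : Dhat.PosDef)
    (σ2 τ2 : ℝ)
    (heq : W * D * Wᵀ + σ2 • (1 : Matrix (Fin p) (Fin p) ℝ)
         = What * Dhat * Whatᵀ + τ2 • (1 : Matrix (Fin p) (Fin p) ℝ)) :
    σ2 = τ2 ∧ W * D * Wᵀ = What * Dhat * Whatᵀ := by
  have psd {k : ℕ} {V : Matrix (Fin p) (Fin k) ℝ} {E : Matrix (Fin k) (Fin k) ℝ}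
      (hE : E.PosDef) : (V * E * Vᵀ).PosSemidef := by
    simpa [conjTranspose_eq_transpose_of_trivial] using
      hE.posSemidef.mul_mul_conjTranspose_same V
  obtain ⟨x, hx0, hx⟩ := W.exists_ne_zero_mul_mul_transpose_mulVec_eq_zero D (by simpa using hr)
  obtain ⟨y, hy0, hy⟩ :=
    What.exists_ne_zero_mul_mul_transpose_mulVec_eq_zero Dhat (by simpa using hrhat)
  have hστ : σ2 = τ2 := le_antisymm
    (le_of_add_smul_one_eq_of_mulVec_eq_zero (psd hD) heq.symm hy0 hy)
    (le_of_add_smul_one_eq_of_mulVec_eq_zero (psd hDhat) heq hx0 hx)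
  subst hστ
  exact ⟨rfl, add_right_cancel heq⟩

/-- Equal noise variance step: if two "low-rank plus spherical noise" decompositions of the
same matrix agree, the noise variances agree, and hence the low-rank parts agree. -/
theorem stmt_2 {p r rhat : ℕ} (hp : 0 < p) (hr : r < p) (hrhat : rhat < p)
    (W : Matrix (Fin p) (Fin r) ℝ) (What : Matrix (Fin p) (Fin rhat) ℝ)
    (hW : W.rank = r) (hWhat : What.rank = rhat)
    (D : Matrix (Fin r) (Fin r) ℝ) (Dhat : Matrix (Fin rhat) (Fin rhat) ℝ)
    (hD : D.PosDef) (hDhat : Dhat.PosDef)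
    (σ2 τ2 : ℝ) (hσ : 0 < σ2) (hτ : 0 < τ2)
    (heq : W * D * Wᵀ + σ2 • (1 : Matrix (Fin p) (Fin p) ℝ)
         = What * Dhat * Whatᵀ + τ2 • (1 : Matrix (Fin p) (Fin p) ℝ)) :
    σ2 = τ2 ∧ W * D * Wᵀ = What * Dhat * Whatᵀ :=
  stmt_2_general hr hrhat W What D Dhat hD hDhat σ2 τ2 heq
end

section
/- Vanishing of the correction matrix: Let A and C be real symmetric p×p matrices such that the column space of A and the column space of C intersect trivially (their intersection is {0}). If rank(A + C) ≤ rank(A), then C = 0. (In the SIFA identifiability proof this is applied with A = V_1 Σ_1 V_1ᵀ positive semidefinite of rank r_1, C the difference of joint blocks with column space contained in the column space of V_{0,1}, and A + C = V̂_1 Σ̂_1 V̂_1ᵀ of rank r_1.) -/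
/-!
Trivially intersecting column spaces force `ker (A + C) = ker A ∩ ker C`, the kernel of the
stacked matrix `[A; C]`. By symmetry its transpose is `[A C]`, whose column space is the direct
sum of those of `A` and `C`, so `rank (A + C) = rank A + rank C` and `rank (A + C) ≤ rank A`
leaves `rank C = 0`.
-/

open Matrix Module

theorem LinearMap.ker_add_eq_inf_of_disjoint_range {R M N : Type*} [Ring R] [AddCommGroup M]
    [Module R M] [AddCommGroup N] [Module R N] {f g : M →ₗ[R] N}
    (h : Disjoint (range f) (range g)) : ker (f + g) = ker f ⊓ ker g := by
  refine le_antisymm (fun x hx => ?_) (fun x ⟨hf, hg⟩ => by simp_all)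
  have hfg : f x = -g x := eq_neg_of_add_eq_zero_left hx
  have hf : f x = 0 := Submodule.disjoint_def.mp h _ ⟨x, rfl⟩ (hfg ▸ ⟨-x, by simp⟩)
  exact ⟨hf, by simpa [hf] using hfg⟩

namespace Matrix

section CommSemiring

variable {R m n n₁ n₂ : Type*} [CommSemiring R]

theorem ker_mulVecLin_fromRows [Fintype n] (A : Matrix n₁ n R) (B : Matrix n₂ n R) :
    LinearMap.ker (fromRows A B).mulVecLin =
      LinearMap.ker A.mulVecLin ⊓ LinearMap.ker B.mulVecLin := by
  ext v
  simp only [LinearMap.mem_ker, mulVecLin_apply, fromRows_mulVec, Submodule.mem_inf]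
  rw [← Sum.elim_zero_zero, Sum.elim_eq_iff]

theorem range_mulVecLin_fromCols [Fintype n₁] [Fintype n₂] (A : Matrix m n₁ R)
    (B : Matrix m n₂ R) :
    LinearMap.range (fromCols A B).mulVecLin =
      LinearMap.range A.mulVecLin ⊔ LinearMap.range B.mulVecLin := by
  ext v
  simp only [Submodule.mem_sup, LinearMap.mem_range, mulVecLin_apply]
  constructor
  · rintro ⟨w, rfl⟩
    exact ⟨_, ⟨_, rfl⟩, _, ⟨_, rfl⟩, (fromCols_mulVec A B w).symm⟩
  · rintro ⟨_, ⟨x, rfl⟩, _, ⟨y, rfl⟩, rfl⟩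
    exact ⟨Sum.elim x y, fromCols_mulVec_sumElim A B x y⟩

end CommSemiring

variable {K m n n₁ n₂ : Type*} [Field K]

theorem rank_add_finrank_ker_mulVecLin [Fintype n] (A : Matrix m n K) :
    A.rank + finrank K (LinearMap.ker A.mulVecLin) = Fintype.card n := by
  rw [rank, LinearMap.finrank_range_add_finrank_ker, finrank_fintype_fun_eq_card]

theorem eq_zero_of_rank_eq_zero [Fintype n] [DecidableEq n] {A : Matrix m n K}
    (h : A.rank = 0) : A = 0 := by
  have : A.mulVecLin = 0 := LinearMap.range_eq_bot.mp (Submodule.finrank_eq_zero.mp h)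
  exact toLin'.injective (by rwa [map_zero, toLin'_apply'])

theorem rank_fromCols_of_disjoint [Fintype n₁] [Fintype n₂] (A : Matrix m n₁ K)
    (B : Matrix m n₂ K)
    (h : Disjoint (LinearMap.range A.mulVecLin) (LinearMap.range B.mulVecLin)) :
    (fromCols A B).rank = A.rank + B.rank := by
  have := Submodule.finrank_sup_add_finrank_inf_eq
    (LinearMap.range A.mulVecLin) (LinearMap.range B.mulVecLin)
  rw [h.eq_bot, finrank_bot, add_zero] at this
  rw [rank, range_mulVecLin_fromCols, this, rank, rank]

theorem IsSymm.rank_add_of_disjoint [Fintype n] {A C : Matrix n n K} (hA : A.IsSymm)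
    (hC : C.IsSymm)
    (h : Disjoint (LinearMap.range A.mulVecLin) (LinearMap.range C.mulVecLin)) :
    (A + C).rank = A.rank + C.rank := by
  have hker : LinearMap.ker (A + C).mulVecLin = LinearMap.ker (fromRows A C).mulVecLin := by
    rw [mulVecLin_add, LinearMap.ker_add_eq_inf_of_disjoint_range h, ker_mulVecLin_fromRows]
  have hrows : (fromRows A C).rank = A.rank + C.rank := by
    rw [← rank_transpose, transpose_fromRows, hA.eq, hC.eq, rank_fromCols_of_disjoint A C h]
  have := (A + C).rank_add_finrank_ker_mulVecLin
  rw [hker, ← (fromRows A C).rank_add_finrank_ker_mulVecLin, hrows] at this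
  omega

end Matrix

/-- Vanishing of the correction matrix: if `A` and `C` are real symmetric `p×p` matrices whose
column spaces intersect trivially and `rank(A + C) ≤ rank(A)`, then `C = 0`. -/
theorem stmt_5 {p : ℕ} (A C : Matrix (Fin p) (Fin p) ℝ)
    (hA : A.IsSymm) (hC : C.IsSymm)
    (hint : LinearMap.range A.mulVecLin ⊓ LinearMap.range C.mulVecLin = ⊥)
    (hrank : (A + C).rank ≤ A.rank) : C = 0 := by
  have hsum := hA.rank_add_of_disjoint hC (disjoint_iff.mpr hint)
  exact eq_zero_of_rank_eq_zero (by omega)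
end

section
/- Orthogonal Procrustes solution: Let r ≤ p, and let M ∈ ℝ^{p×r} have the decomposition M = L D Rᵀ, where L ∈ ℝ^{p×r} satisfies LᵀL = I_r, R ∈ ℝ^{r×r} is orthogonal, and D ∈ ℝ^{r×r} is diagonal with strictly positive diagonal entries. Then for every V ∈ ℝ^{p×r} with VᵀV = I_r, one has tr(Vᵀ M) ≤ tr(D), with equality if and only if V = L Rᵀ. In particular, V = L Rᵀ is the unique maximizer of V ↦ tr(Vᵀ M) over matrices with orthonormal columns. -/
/-!
Put `W = V R`, which again has orthonormal columns. Cycling the trace gives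
`tr(Vᵀ M) = tr(Wᵀ L D)`, and since `W` and `L` both have unit columns,
`2 (tr D - tr(Wᵀ L D)) = Σᵢ dᵢ ‖wᵢ - lᵢ‖²`. With all `dᵢ > 0` this is nonnegative and vanishes
exactly when `W = L`, i.e. when `V = L Rᵀ`.
-/

open Matrix

namespace Matrix

variable {m n α : Type*} [Fintype m] [Fintype n]

theorem trace_transpose_mul_mul_mul_transpose [CommSemiring α] (V L : Matrix m n α)
    (D R : Matrix n n α) : (Vᵀ * (L * D * Rᵀ)).trace = ((V * R)ᵀ * L * D).trace := by
  rw [← Matrix.mul_assoc, trace_mul_comm, transpose_mul]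
  simp only [Matrix.mul_assoc]

variable [DecidableEq n]

theorem trace_transpose_mul_self_mul_diagonal [CommSemiring α] (X : Matrix m n α) (d : n → α) :
    (Xᵀ * X * diagonal d).trace = ∑ i, (∑ k, X k i ^ 2) * d i := by
  simp only [trace, diag, mul_diagonal, mul_apply (M := Xᵀ), transpose_apply, sq]

theorem trace_transpose_mul_self_mul_diagonal_nonneg [CommRing α] [LinearOrder α]
    [IsStrictOrderedRing α] (X : Matrix m n α) {d : n → α} (hd : ∀ i, 0 ≤ d i) :
    0 ≤ (Xᵀ * X * diagonal d).trace := by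
  rw [trace_transpose_mul_self_mul_diagonal]
  exact Finset.sum_nonneg fun i _ => mul_nonneg (Finset.sum_nonneg fun k _ => sq_nonneg _) (hd i)

theorem trace_transpose_mul_self_mul_diagonal_eq_zero_iff [CommRing α] [LinearOrder α]
    [IsStrictOrderedRing α] (X : Matrix m n α) {d : n → α} (hd : ∀ i, 0 < d i) :
    (Xᵀ * X * diagonal d).trace = 0 ↔ X = 0 := by
  rw [trace_transpose_mul_self_mul_diagonal, Finset.sum_eq_zero_iff_of_nonneg fun i _ =>
    mul_nonneg (Finset.sum_nonneg fun k _ => sq_nonneg _) (hd i).le]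
  simp only [Finset.mem_univ, true_implies, mul_eq_zero, (hd _).ne', or_false,
    Finset.sum_eq_zero_iff_of_nonneg fun k _ => sq_nonneg _, sq_eq_zero_iff]
  constructor
  · intro h; ext k i; exact h i k
  · rintro rfl; simp

theorem trace_sub_transpose_mul_sub_mul_diagonal [CommRing α] {W L : Matrix m n α}
    (hW : Wᵀ * W = 1) (hL : Lᵀ * L = 1) (d : n → α) :
    ((W - L)ᵀ * (W - L) * diagonal d).trace
      = 2 * ((diagonal d).trace - (Wᵀ * L * diagonal d).trace) := by
  have hsymm : (Lᵀ * W * diagonal d).trace = (Wᵀ * L * diagonal d).trace := by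
    rw [← trace_transpose, transpose_mul, transpose_mul, diagonal_transpose, transpose_transpose,
      trace_mul_comm]
  simp only [transpose_sub, Matrix.sub_mul, Matrix.mul_sub, hW, hL, trace_sub, one_mul, hsymm]
  ring

end Matrix

theorem stmt_9_general {p r : ℕ}
    (L : Matrix (Fin p) (Fin r) ℝ) (R : Matrix (Fin r) (Fin r) ℝ)
    (d : Fin r → ℝ)
    (hL : Lᵀ * L = 1) (hR1 : Rᵀ * R = 1) (hR2 : R * Rᵀ = 1)
    (hd : ∀ i, 0 < d i)
    (M : Matrix (Fin p) (Fin r) ℝ) (hM : M = L * Matrix.diagonal d * Rᵀ) :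
    ∀ V : Matrix (Fin p) (Fin r) ℝ, Vᵀ * V = 1 →
      (Vᵀ * M).trace ≤ (Matrix.diagonal d).trace ∧
      ((Vᵀ * M).trace = (Matrix.diagonal d).trace ↔ V = L * Rᵀ) := by
  intro V hV
  have hW : (V * R)ᵀ * (V * R) = 1 := by
    rw [transpose_mul, Matrix.mul_assoc, ← Matrix.mul_assoc Vᵀ, hV, Matrix.one_mul, hR1]
  have hgap : ((V * R - L)ᵀ * (V * R - L) * diagonal d).trace
      = 2 * ((diagonal d).trace - (Vᵀ * M).trace) := by
    rw [trace_sub_transpose_mul_sub_mul_diagonal hW hL, hM,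
      trace_transpose_mul_mul_mul_transpose]
  have hsolution : V = L * Rᵀ ↔ V * R - L = 0 := by
    rw [sub_eq_zero]
    constructor
    · rintro rfl
      rw [Matrix.mul_assoc, hR1, Matrix.mul_one]
    · intro h
      rw [← h, Matrix.mul_assoc, hR2, Matrix.mul_one]
  have hnonneg := trace_transpose_mul_self_mul_diagonal_nonneg (V * R - L) fun i => (hd i).le
  refine ⟨by linarith, ?_⟩
  rw [hsolution, ← trace_transpose_mul_self_mul_diagonal_eq_zero_iff _ hd, hgap]
  constructor <;> intro h <;> linarith

/-- Orthogonal Procrustes solution: with `M = L D Rᵀ`, `LᵀL = I`, `R` orthogonal and `D`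
diagonal with strictly positive entries, for every `V` with orthonormal columns one has
`tr(Vᵀ M) ≤ tr(D)`, with equality if and only if `V = L Rᵀ`. -/
theorem stmt_9 {p r : ℕ} (hrp : r ≤ p)
    (L : Matrix (Fin p) (Fin r) ℝ) (R : Matrix (Fin r) (Fin r) ℝ)
    (d : Fin r → ℝ)
    (hL : Lᵀ * L = 1) (hR1 : Rᵀ * R = 1) (hR2 : R * Rᵀ = 1)
    (hd : ∀ i, 0 < d i)
    (M : Matrix (Fin p) (Fin r) ℝ) (hM : M = L * Matrix.diagonal d * Rᵀ) :
    ∀ V : Matrix (Fin p) (Fin r) ℝ, Vᵀ * V = 1 →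
      (Vᵀ * M).trace ≤ (Matrix.diagonal d).trace ∧
      ((Vᵀ * M).trace = (Matrix.diagonal d).trace ↔ V = L * Rᵀ) :=
  stmt_9_general L R d hL hR1 hR2 hd M hM
end

section
/- Weighted trace inequality for matrices with orthonormal columns: Let A, B ∈ ℝ^{p×r} satisfy AᵀA = BᵀB = I_r, and let D ∈ ℝ^{r×r} be diagonal with strictly positive diagonal entries. Then every diagonal entry of AᵀB is at most 1, hence tr(D AᵀB) ≤ tr(D), and equality tr(D AᵀB) = tr(D) holds if and only if A = B. -/
/-!
Expanding the square, the `i`-th column of `A - B` has squared norm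
`|aᵢ|² + |bᵢ|² - 2 (AᵀB)ᵢᵢ = 2 - 2 (AᵀB)ᵢᵢ`, so `(AᵀB)ᵢᵢ ≤ 1` with equality exactly when the
`i`-th columns agree. Weighting by `dᵢ > 0` and summing, `tr(D AᵀB) ≤ tr D`, and equality forces
`(AᵀB)ᵢᵢ = 1` for every `i`, that is `A = B`.
-/

open Matrix

section ColumnGeometry

variable {m n R : Type*} [Fintype m] [CommRing R]

lemma Matrix.transpose_mul_self_apply_self (M : Matrix m n R) (i : n) :
    (Mᵀ * M) i i = ∑ k, M k i ^ 2 := by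
  simp only [mul_apply, transpose_apply, sq]

lemma Matrix.transpose_mul_self_sub_apply_self (A B : Matrix m n R) (i : n) :
    ((A - B)ᵀ * (A - B)) i i = (Aᵀ * A) i i + (Bᵀ * B) i i - 2 * (Aᵀ * B) i i := by
  simp only [mul_apply, transpose_apply, sub_apply, Finset.mul_sum, ← Finset.sum_add_distrib,
    ← Finset.sum_sub_distrib]
  exact Finset.sum_congr rfl fun k _ => by ring

variable [LinearOrder R] [IsStrictOrderedRing R]

lemma Matrix.transpose_mul_self_apply_self_nonneg (M : Matrix m n R) (i : n) :
    0 ≤ (Mᵀ * M) i i := by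
  rw [transpose_mul_self_apply_self]
  exact Finset.sum_nonneg fun k _ => sq_nonneg _

lemma Matrix.transpose_mul_self_apply_self_eq_zero_iff (M : Matrix m n R) (i : n) :
    (Mᵀ * M) i i = 0 ↔ ∀ k, M k i = 0 := by
  rw [transpose_mul_self_apply_self,
    Finset.sum_eq_zero_iff_of_nonneg fun k _ => sq_nonneg (M k i)]
  simp

variable {A B : Matrix m n R}

lemma Matrix.transpose_mul_apply_self_le_one (hA : ∀ i, (Aᵀ * A) i i = 1)
    (hB : ∀ i, (Bᵀ * B) i i = 1) (i : n) : (Aᵀ * B) i i ≤ 1 := by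
  have := (A - B).transpose_mul_self_apply_self_nonneg i
  rw [transpose_mul_self_sub_apply_self, hA, hB] at this
  linarith

lemma Matrix.transpose_mul_apply_self_eq_one_iff (hA : ∀ i, (Aᵀ * A) i i = 1)
    (hB : ∀ i, (Bᵀ * B) i i = 1) (i : n) : (Aᵀ * B) i i = 1 ↔ ∀ k, A k i = B k i := by
  have hcol := (A - B).transpose_mul_self_apply_self_eq_zero_iff i
  rw [transpose_mul_self_sub_apply_self, hA, hB] at hcol
  simp only [sub_apply, sub_eq_zero] at hcol
  rw [← hcol]
  constructor <;> intro h <;> linarith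

end ColumnGeometry

lemma Finset.sum_mul_le_sum_of_le_one {ι R : Type*} [CommRing R] [LinearOrder R]
    [IsStrictOrderedRing R] (s : Finset ι) {d x : ι → R} (hd : ∀ i ∈ s, 0 ≤ d i)
    (hx : ∀ i ∈ s, x i ≤ 1) : ∑ i ∈ s, d i * x i ≤ ∑ i ∈ s, d i :=
  Finset.sum_le_sum fun i hi => mul_le_of_le_one_right (hd i hi) (hx i hi)

lemma Finset.sum_mul_eq_sum_iff_of_le_one {ι R : Type*} [CommRing R] [LinearOrder R]
    [IsStrictOrderedRing R] (s : Finset ι) {d x : ι → R} (hd : ∀ i ∈ s, 0 < d i)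
    (hx : ∀ i ∈ s, x i ≤ 1) : ∑ i ∈ s, d i * x i = ∑ i ∈ s, d i ↔ ∀ i ∈ s, x i = 1 := by
  rw [Finset.sum_eq_sum_iff_of_le fun i hi => mul_le_of_le_one_right (hd i hi).le (hx i hi)]
  exact forall₂_congr fun i hi => by
    rw [mul_eq_left₀ (hd i hi).ne']

lemma Matrix.trace_diagonal_mul {n R : Type*} [Fintype n] [DecidableEq n]
    [NonUnitalNonAssocSemiring R] (d : n → R) (M : Matrix n n R) :
    (diagonal d * M).trace = ∑ i, d i * M i i := by
  simp only [trace, diag_apply, diagonal_mul]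

/-- Weighted trace inequality for matrices with orthonormal columns: if `AᵀA = BᵀB = I` and
`D` is diagonal with strictly positive entries, then every diagonal entry of `AᵀB` is at
most `1`, hence `tr(D AᵀB) ≤ tr(D)`, with equality if and only if `A = B`. -/
theorem stmt_10 {p r : ℕ} (A B : Matrix (Fin p) (Fin r) ℝ)
    (hA : Aᵀ * A = 1) (hB : Bᵀ * B = 1)
    (d : Fin r → ℝ) (hd : ∀ i, 0 < d i) :
    (∀ i, (Aᵀ * B) i i ≤ 1) ∧
    (Matrix.diagonal d * (Aᵀ * B)).trace ≤ (Matrix.diagonal d).trace ∧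
    ((Matrix.diagonal d * (Aᵀ * B)).trace = (Matrix.diagonal d).trace ↔ A = B) := by
  have hA' : ∀ i, (Aᵀ * A) i i = 1 := by simp [hA]
  have hB' : ∀ i, (Bᵀ * B) i i = 1 := by simp [hB]
  have hle := transpose_mul_apply_self_le_one hA' hB'
  rw [trace_diagonal_mul, trace_diagonal]
  refine ⟨hle, Finset.sum_mul_le_sum_of_le_one _ (fun i _ => (hd i).le) fun i _ => hle i, ?_⟩
  rw [Finset.sum_mul_eq_sum_iff_of_le_one _ (fun i _ => hd i) fun i _ => hle i, ← Matrix.ext_iff]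
  simp only [Finset.mem_univ, forall_const, transpose_mul_apply_self_eq_one_iff hA' hB']
  exact forall_comm
end

section
/- Non-identifiability under the basic conditions alone (construction of Example 1): Fix K = 2 and suppose r_1 ≥ 1. Let V_0 ∈ ℝ^{(p_1+p_2)×r_0}, V_1 ∈ ℝ^{p_1×r_1}, V_2 ∈ ℝ^{p_2×r_2}, let Σ_0, Σ_1, Σ_2 be diagonal with strictly positive diagonal entries, and let f_0, f_1, f_2 be the mean functions. Write v = first column of V_1, λ = first diagonal entry of Σ_1, g = first component of f_1, and let V_1', Σ_1', f_1' be the remaining columns, diagonal entries, and components. Define Ṽ_0 = (V_0, (vᵀ, 0ᵀ)ᵀ) ∈ ℝ^{(p_1+p_2)×(r_0+1)}, Σ̃_0 = blkdiag(Σ_0, λ), and f̃_0 = (f_0, g). Then (i) Ṽ_0 Σ̃_0 Ṽ_0ᵀ + blkdiag(V_1', V_2) · blkdiag(Σ_1', Σ_2) · blkdiag(V_1', V_2)ᵀ = V_0 Σ_0 V_0ᵀ + blkdiag(V_1, V_2) · blkdiag(Σ_1, Σ_2) · blkdiag(V_1, V_2)ᵀ, and (ii) Ṽ_0 f̃_0(x)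 + blkdiag(V_1', V_2)(f_1'(x)ᵀ, f_2(x)ᵀ)ᵀ = V_0 f_0(x) + blkdiag(V_1, V_2)(f_1(x)ᵀ, f_2(x)ᵀ)ᵀ for every x ∈ ℝ^q. Hence moving the first individual component of block 1 into the joint structure leaves the grand covariance Σ⋆ and the mean function μ⋆ unchanged. -/
/-!
Each side is a sum over loading columns: the covariance part is `∑ⱼ λⱼ vⱼ vⱼᵀ` and the mean is
`∑ⱼ fⱼ(x) vⱼ`, where a column of an individual block is padded by zeros to full length. Moving
the first column of `V₁` into the joint block keeps the padded column `(vᵀ, 0ᵀ)ᵀ` together with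
its weight `λ` and coefficient `g`, so both sums are merely regrouped.
-/

open Matrix

namespace Matrix

variable {m m₁ m₂ n₁ n₂ ι α : Type*}

section Semiring

variable [Semiring α]

theorem fromCols_mul_diagonal [Fintype n₁] [Fintype n₂] [DecidableEq n₁] [DecidableEq n₂]
    (A₁ : Matrix m n₁ α) (A₂ : Matrix m n₂ α) (d₁ : n₁ → α) (d₂ : n₂ → α) :
    fromCols A₁ A₂ * diagonal (Sum.elim d₁ d₂)
      = fromCols (A₁ * diagonal d₁) (A₂ * diagonal d₂) := by
  ext i (j | j) <;> simp

theorem fromCols_mul_diagonal_mul_transpose [Fintype n₁] [Fintype n₂] [DecidableEq n₁]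
    [DecidableEq n₂] (A₁ : Matrix m n₁ α) (A₂ : Matrix m n₂ α) (d₁ : n₁ → α) (d₂ : n₂ → α) :
    fromCols A₁ A₂ * diagonal (Sum.elim d₁ d₂) * (fromCols A₁ A₂)ᵀ
      = A₁ * diagonal d₁ * A₁ᵀ + A₂ * diagonal d₂ * A₂ᵀ := by
  rw [fromCols_mul_diagonal, transpose_fromCols, fromCols_mul_fromRows]

theorem fromBlocks_mul_diagonal_mul_transpose [Fintype n₁] [Fintype n₂] [DecidableEq n₁]
    [DecidableEq n₂] (A : Matrix m₁ n₁ α) (D : Matrix m₂ n₂ α) (d₁ : n₁ → α) (d₂ : n₂ → α) :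
    fromBlocks A 0 0 D * diagonal (Sum.elim d₁ d₂) * (fromBlocks A 0 0 D)ᵀ
      = fromBlocks (A * diagonal d₁ * Aᵀ) 0 0 (D * diagonal d₂ * Dᵀ) := by
  rw [← fromBlocks_diagonal, fromBlocks_transpose, fromBlocks_multiply, fromBlocks_multiply]
  simp

theorem fromBlocks_mulVec_sumElim [Fintype n₁] [Fintype n₂] (A : Matrix m₁ n₁ α)
    (D : Matrix m₂ n₂ α) (x₁ : n₁ → α) (x₂ : n₂ → α) :
    fromBlocks A 0 0 D *ᵥ Sum.elim x₁ x₂ = Sum.elim (A *ᵥ x₁) (D *ᵥ x₂) := by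
  simp [fromBlocks_mulVec]

end Semiring

theorem vecMulVec_sumElim_zero [MulZeroClass α] (u : m₁ → α) :
    vecMulVec (Sum.elim u (0 : m₂ → α)) (Sum.elim u (0 : m₂ → α))
      = fromBlocks (vecMulVec u u) 0 0 0 := by
  ext (i | i) (j | j) <;> simp [vecMulVec_apply]

section CommSemiring

variable [CommSemiring α]

theorem replicateCol_mul_diagonal_mul_transpose [Fintype ι] [Unique ι] [DecidableEq ι]
    (u : m → α) (a : α) :
    replicateCol ι u * diagonal (fun _ : ι => a) * (replicateCol ι u)ᵀ = a • vecMulVec u u := by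
  ext i j
  simp only [replicateCol, mul_apply, Finset.univ_unique, of_apply, Finset.sum_singleton,
    transpose_apply, diagonal_apply_eq, smul_apply, vecMulVec_apply, smul_eq_mul]
  ring

theorem mul_diagonal_mul_transpose_fin_succ {k : ℕ} (A : Matrix m (Fin (k + 1)) α)
    (d : Fin (k + 1) → α) :
    A * diagonal d * Aᵀ = d 0 • vecMulVec (fun i => A i 0) (fun i => A i 0)
      + A.submatrix id Fin.succ * diagonal (fun j : Fin k => d j.succ)
        * (A.submatrix id Fin.succ)ᵀ := by
  ext i i'
  simp only [mul_apply, diagonal_apply, mul_ite, mul_zero, Finset.sum_ite_eq', Finset.mem_univ,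
    if_true, transpose_apply, Fin.sum_univ_succ, transpose_submatrix, add_apply, smul_apply,
    vecMulVec_apply, smul_eq_mul, submatrix_apply, id_eq]
  ring

theorem replicateCol_mulVec_const [Fintype ι] [Unique ι] (u : m → α) (a : α) :
    replicateCol ι u *ᵥ (fun _ => a) = a • u := by
  ext i
  simp [mulVec, dotProduct, replicateCol, mul_comm]

theorem mulVec_fin_succ {k : ℕ} (A : Matrix m (Fin (k + 1)) α) (x : Fin (k + 1) → α) :
    A *ᵥ x = x 0 • (fun i => A i 0) + A.submatrix id Fin.succ *ᵥ fun j => x j.succ := by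
  ext i
  simp [mulVec, dotProduct, Fin.sum_univ_succ, mul_comm]

end CommSemiring

end Matrix

section SIFA

variable {m₁ m₂ n₀ n₂ α : Type*} [CommSemiring α] [Fintype n₀] [Fintype n₂] {k : ℕ}
  (V₀ : Matrix (m₁ ⊕ m₂) n₀ α) (V₁ : Matrix m₁ (Fin (k + 1)) α) (V₂ : Matrix m₂ n₂ α)

theorem covariance_moveFirstIndividualToJoint [DecidableEq n₀] [DecidableEq n₂]
    (d₀ : n₀ → α) (d₁ : Fin (k + 1) → α) (d₂ : n₂ → α) :
    fromCols V₀ (replicateCol (Fin 1) (Sum.elim (fun i => V₁ i 0) 0))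
        * diagonal (Sum.elim d₀ fun _ : Fin 1 => d₁ 0)
        * (fromCols V₀ (replicateCol (Fin 1) (Sum.elim (fun i => V₁ i 0) 0)))ᵀ
      + fromBlocks (V₁.submatrix id Fin.succ) 0 0 V₂
        * diagonal (Sum.elim (fun j : Fin k => d₁ j.succ) d₂)
        * (fromBlocks (V₁.submatrix id Fin.succ) 0 0 V₂)ᵀ
    = V₀ * diagonal d₀ * V₀ᵀ
      + fromBlocks V₁ 0 0 V₂ * diagonal (Sum.elim d₁ d₂) * (fromBlocks V₁ 0 0 V₂)ᵀ := by
  rw [fromCols_mul_diagonal_mul_transpose, replicateCol_mul_diagonal_mul_transpose,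
    fromBlocks_mul_diagonal_mul_transpose, fromBlocks_mul_diagonal_mul_transpose,
    mul_diagonal_mul_transpose_fin_succ V₁, vecMulVec_sumElim_zero]
  simp [fromBlocks_smul, fromBlocks_add, add_assoc]

theorem mean_moveFirstIndividualToJoint (x₀ : n₀ → α) (x₁ : Fin (k + 1) → α) (x₂ : n₂ → α) :
    fromCols V₀ (replicateCol (Fin 1) (Sum.elim (fun i => V₁ i 0) 0))
        *ᵥ Sum.elim x₀ (fun _ => x₁ 0)
      + fromBlocks (V₁.submatrix id Fin.succ) 0 0 V₂ *ᵥ Sum.elim (fun j => x₁ j.succ) x₂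
    = V₀ *ᵥ x₀ + fromBlocks V₁ 0 0 V₂ *ᵥ Sum.elim x₁ x₂ := by
  rw [fromCols_mulVec_sumElim, replicateCol_mulVec_const, fromBlocks_mulVec_sumElim,
    fromBlocks_mulVec_sumElim, mulVec_fin_succ V₁]
  ext (i | i) <;> simp [add_assoc]

end SIFA

theorem stmt_14_general {p1 p2 r0 r1 r2 q : ℕ}
    (V0 : Matrix (Fin p1 ⊕ Fin p2) (Fin r0) ℝ)
    (V1 : Matrix (Fin p1) (Fin (r1 + 1)) ℝ)
    (V2 : Matrix (Fin p2) (Fin r2) ℝ)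
    (d0 : Fin r0 → ℝ) (d1 : Fin (r1 + 1) → ℝ) (d2 : Fin r2 → ℝ)
    (f0 : (Fin q → ℝ) → Fin r0 → ℝ) (f1 : (Fin q → ℝ) → Fin (r1 + 1) → ℝ)
    (f2 : (Fin q → ℝ) → Fin r2 → ℝ) :
    -- the padded first column of `V1`, as a joint loading column
    let v : Fin p1 ⊕ Fin p2 → ℝ := Sum.elim (fun i => V1 i 0) (fun _ => 0)
    -- the enlarged joint loading matrix `Ṽ₀ = (V₀, (vᵀ, 0ᵀ)ᵀ)`
    let Vt0 : Matrix (Fin p1 ⊕ Fin p2) (Fin r0 ⊕ Fin 1) ℝ :=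
      Matrix.fromCols V0 (Matrix.of fun i _ => v i)
    -- the remaining individual loadings of block 1
    let V1' : Matrix (Fin p1) (Fin r1) ℝ := V1.submatrix id Fin.succ
    -- (i) the grand covariance (minus the common noise term) is unchanged
    ((Vt0 * Matrix.diagonal (Sum.elim d0 fun _ => d1 0) : Matrix (Fin p1 ⊕ Fin p2) (Fin r0 ⊕ Fin 1) ℝ) * Vt0ᵀ
        + (Matrix.fromBlocks V1' 0 0 V2
          * Matrix.diagonal (Sum.elim (fun j => d1 j.succ) d2) : Matrix (Fin p1 ⊕ Fin p2) (Fin r1 ⊕ Fin r2) ℝ)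
          * (Matrix.fromBlocks V1' 0 0 V2)ᵀ
      = V0 * Matrix.diagonal d0 * V0ᵀ
        + Matrix.fromBlocks V1 0 0 V2 * Matrix.diagonal (Sum.elim d1 d2)
          * (Matrix.fromBlocks V1 0 0 V2)ᵀ) ∧
    -- (ii) the mean function is unchanged
    (∀ x : Fin q → ℝ,
      Vt0 *ᵥ Sum.elim (f0 x) (fun _ => f1 x 0)
          + Matrix.fromBlocks V1' 0 0 V2 *ᵥ Sum.elim (fun j => f1 x j.succ) (f2 x)
        = V0 *ᵥ f0 x + Matrix.fromBlocks V1 0 0 V2 *ᵥ Sum.elim (f1 x) (f2 x)) := by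
  -- Checked up to unfolding: `of fun i _ => v i` is `replicateCol (Fin 1) v`, and the two
  -- type-ascribed products elaborate through `CStarMatrix`'s `HMul`, i.e. matrix multiplication.
  exact ⟨covariance_moveFirstIndividualToJoint V0 V1 V2 d0 d1 d2,
    fun x => mean_moveFirstIndividualToJoint V0 V1 V2 (f0 x) (f1 x) (f2 x)⟩

/-- Non-identifiability under the basic conditions alone (Example 1, K = 2): moving the first
individual component of block 1 (with `r₁ ≥ 1`, encoded by using `r₁ + 1` columns) into the
joint structure leaves both the grand covariance `Σ⋆` and the mean function `μ⋆` unchanged. -/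
theorem stmt_14 {p1 p2 r0 r1 r2 q : ℕ}
    (V0 : Matrix (Fin p1 ⊕ Fin p2) (Fin r0) ℝ)
    (V1 : Matrix (Fin p1) (Fin (r1 + 1)) ℝ)
    (V2 : Matrix (Fin p2) (Fin r2) ℝ)
    (d0 : Fin r0 → ℝ) (d1 : Fin (r1 + 1) → ℝ) (d2 : Fin r2 → ℝ)
    (hd0 : ∀ i, 0 < d0 i) (hd1 : ∀ i, 0 < d1 i) (hd2 : ∀ i, 0 < d2 i)
    (f0 : (Fin q → ℝ) → Fin r0 → ℝ) (f1 : (Fin q → ℝ) → Fin (r1 + 1) → ℝ)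
    (f2 : (Fin q → ℝ) → Fin r2 → ℝ) :
    -- the padded first column of `V1`, as a joint loading column
    let v : Fin p1 ⊕ Fin p2 → ℝ := Sum.elim (fun i => V1 i 0) (fun _ => 0)
    -- the enlarged joint loading matrix `Ṽ₀ = (V₀, (vᵀ, 0ᵀ)ᵀ)`
    let Vt0 : Matrix (Fin p1 ⊕ Fin p2) (Fin r0 ⊕ Fin 1) ℝ :=
      Matrix.fromCols V0 (Matrix.of fun i _ => v i)
    -- the remaining individual loadings of block 1
    let V1' : Matrix (Fin p1) (Fin r1) ℝ := V1.submatrix id Fin.succ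
    -- (i) the grand covariance (minus the common noise term) is unchanged
    ((Vt0 * Matrix.diagonal (Sum.elim d0 fun _ => d1 0) : Matrix (Fin p1 ⊕ Fin p2) (Fin r0 ⊕ Fin 1) ℝ) * Vt0ᵀ
        + (Matrix.fromBlocks V1' 0 0 V2
          * Matrix.diagonal (Sum.elim (fun j => d1 j.succ) d2) : Matrix (Fin p1 ⊕ Fin p2) (Fin r1 ⊕ Fin r2) ℝ)
          * (Matrix.fromBlocks V1' 0 0 V2)ᵀ
      = V0 * Matrix.diagonal d0 * V0ᵀ
        + Matrix.fromBlocks V1 0 0 V2 * Matrix.diagonal (Sum.elim d1 d2)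
          * (Matrix.fromBlocks V1 0 0 V2)ᵀ) ∧
    -- (ii) the mean function is unchanged
    (∀ x : Fin q → ℝ,
      Vt0 *ᵥ Sum.elim (f0 x) (fun _ => f1 x 0)
          + Matrix.fromBlocks V1' 0 0 V2 *ᵥ Sum.elim (fun j => f1 x j.succ) (f2 x)
        = V0 *ᵥ f0 x + Matrix.fromBlocks V1 0 0 V2 *ᵥ Sum.elim (f1 x) (f2 x)) :=
  stmt_14_general V0 V1 V2 d0 d1 d2 f0 f1 f2
end
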